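/- arXiv:2505.11403 — 2 statements merged into one kernel-verified Lean document; each statement's English description precedes it below -/
import Mathlib

section
/- Let σ be a cyclic permutation of an alphabet A of size N ≥ 3 and let δ = σ^j with 1 ≤ j < N and j ≢ 1 (mod N). Then no factor of the infinite word W generated by ψ(a) = a σ(a) is of the form a δ(a) δ²(a); i.e., W contains no strongly (3, δ)-repetition of block length 1. -/
/-!
Every letter of `W` at an odd position `2k+1` is `σ` applied to the letter before it, because
`W = ψ(W)`. Any factor of length three contains such a pair, so it has two consecutive letters
`b, δ b` with `δ b = σ b`, i.e. `σ^j b = σ b`. Since every orbit of `σ` has length exactly `N`,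
this forces `j ≡ 1 (mod N)`.
-/

/-- The cyclic shift morphism ψ(a) = a σ(a), extended to words. -/
def psi {A : Type*} (σ : Equiv.Perm A) (w : List A) : List A :=
  w.flatMap (fun a => [a, σ a])

/-- The infinite fixed point W = lim_n ψ^n(a₀). -/
def Wfix {A : Type*} (σ : Equiv.Perm A) (a₀ : A) (n : ℕ) : A :=
  ((psi σ)^[n + 1] [a₀]).getD n a₀

/-- A finite word u is a factor of an infinite word W if it occurs in W at some position. -/
def IsFactorOf {A : Type*} (u : List A) (W : ℕ → A) : Prop :=
  ∃ i : ℕ, u = (List.range u.length).map (fun k => W (i + k))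

section Psi

variable {A : Type*} (σ : Equiv.Perm A)

lemma psi_cons (a : A) (w : List A) : psi σ (a :: w) = a :: σ a :: psi σ w := by
  simp [psi]

lemma psi_append (u v : List A) : psi σ (u ++ v) = psi σ u ++ psi σ v := by
  simp [psi]

lemma psi_iterate_append (m : ℕ) (u v : List A) :
    (psi σ)^[m] (u ++ v) = (psi σ)^[m] u ++ (psi σ)^[m] v := by
  induction m generalizing u v with
  | zero => rfl
  | succ m ih => simp only [Function.iterate_succ_apply', ih, psi_append]

lemma length_psi (w : List A) : (psi σ w).length = 2 * w.length := by
  induction w with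
  | nil => rfl
  | cons a w ih => simp only [psi_cons, List.length_cons, ih]; ring

lemma length_psi_iterate_singleton (m : ℕ) (a : A) : ((psi σ)^[m] [a]).length = 2 ^ m := by
  induction m with
  | zero => rfl
  | succ m ih => rw [Function.iterate_succ_apply', length_psi, ih, pow_succ']

lemma getD_psi_two_mul (w : List A) {k : ℕ} (hk : k < w.length) (d : A) :
    (psi σ w).getD (2 * k) d = w.getD k d := by
  induction w generalizing k with
  | nil => simp at hk
  | cons a w ih =>
    cases k with
    | zero => simp [psi_cons]
    | succ k =>
      rw [psi_cons, show 2 * (k + 1) = 2 * k + 1 + 1 by ring]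
      simpa using ih (by simpa using hk)

lemma getD_psi_two_mul_add_one (w : List A) {k : ℕ} (hk : k < w.length) (d : A) :
    (psi σ w).getD (2 * k + 1) d = σ (w.getD k d) := by
  induction w generalizing k with
  | nil => simp at hk
  | cons a w ih =>
    cases k with
    | zero => simp [psi_cons]
    | succ k =>
      rw [psi_cons, show 2 * (k + 1) + 1 = 2 * k + 1 + 1 + 1 by ring]
      simpa using ih (by simpa using hk)

end Psi

section Wfix

variable {A : Type*} (σ : Equiv.Perm A) (a₀ : A)

lemma getD_psi_iterate_succ {n m : ℕ} (hn : n < 2 ^ m) :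
    ((psi σ)^[m + 1] [a₀]).getD n a₀ = ((psi σ)^[m] [a₀]).getD n a₀ := by
  rw [Function.iterate_succ_apply, show psi σ [a₀] = [a₀] ++ [σ a₀] from rfl,
    psi_iterate_append, List.getD_append _ _ _ _ (by rwa [length_psi_iterate_singleton])]

lemma Wfix_eq_getD_psi_iterate {n m : ℕ} (h : n < m) :
    Wfix σ a₀ n = ((psi σ)^[m] [a₀]).getD n a₀ := by
  induction m, h using Nat.le_induction with
  | base => rfl
  | succ m hm ih =>
    rw [ih, getD_psi_iterate_succ σ a₀ ((Nat.lt_two_pow_self).trans_le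
      (Nat.pow_le_pow_right two_pos (by omega)))]

lemma Wfix_two_mul_add_one (k : ℕ) : Wfix σ a₀ (2 * k + 1) = σ (Wfix σ a₀ (2 * k)) := by
  have hk : k < ((psi σ)^[2 * k + 1] [a₀]).length := by
    rw [length_psi_iterate_singleton]
    exact Nat.lt_two_pow_self.trans_le (Nat.pow_le_pow_right two_pos (by omega))
  rw [Wfix_eq_getD_psi_iterate σ a₀ (m := 2 * k + 2) (by omega),
    Wfix_eq_getD_psi_iterate σ a₀ (m := 2 * k + 2) (by omega),
    Function.iterate_succ_apply', getD_psi_two_mul_add_one σ _ hk, getD_psi_two_mul σ _ hk]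

end Wfix

lemma Equiv.Perm.pow_apply_eq_pow_apply_iff_modEq {A : Type*} {σ : Equiv.Perm A} {N : ℕ}
    (hσ : ∀ (a : A) (k : ℕ), (σ ^ k) a = a ↔ N ∣ k) (a : A) (i k : ℕ) :
    (σ ^ i) a = (σ ^ k) a ↔ i ≡ k [MOD N] := by
  wlog h : i ≤ k generalizing i k
  · rw [eq_comm, this k i (by omega), Nat.ModEq.comm]
  rw [← pow_sub_mul_pow σ h, Equiv.Perm.mul_apply, eq_comm, hσ, Nat.modEq_iff_dvd' h]

theorem no_block_one_rep_general {A : Type*} (N : ℕ) (σ : Equiv.Perm A)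
    (hσ : ∀ (a : A) (k : ℕ), (σ ^ k) a = a ↔ N ∣ k)
    (j : ℕ) (hj : ¬ j ≡ 1 [MOD N])
    (δ : Equiv.Perm A) (hδ : δ = σ ^ j) (a₀ : A) :
    ∀ a : A, ¬ IsFactorOf [a, δ a, δ (δ a)] (Wfix σ a₀) := by
  have hδσ (b : A) : δ b ≠ σ b := fun h =>
    hj ((Equiv.Perm.pow_apply_eq_pow_apply_iff_modEq hσ b j 1).1 (by simpa [hδ] using h))
  rintro a ⟨i, h⟩
  obtain ⟨h0, h1, h2⟩ : a = Wfix σ a₀ i ∧ δ a = Wfix σ a₀ (i + 1) ∧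
      δ (δ a) = Wfix σ a₀ (i + 2) := by
    simpa [List.range_succ] using h
  obtain ⟨k, rfl | rfl⟩ := Nat.even_or_odd' i
  · exact hδσ a (by rw [h1, h0, Wfix_two_mul_add_one])
  · exact hδσ (δ a) (by rw [h2, h1, show 2 * k + 1 + 2 = 2 * (k + 1) + 1 by ring,
      Wfix_two_mul_add_one, show 2 * (k + 1) = 2 * k + 1 + 1 by ring])

/-- for σ a single N-cycle on A with N = |A| ≥ 3 and δ = σ^j with
    1 ≤ j < N, j ≢ 1 (mod N), the word W contains no factor a δ(a) δ²(a), i.e. no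
    strongly (3, δ)-repetition of block length 1. -/
theorem no_block_one_rep {A : Type*} [Fintype A] (N : ℕ) (hN : Fintype.card A = N)
    (hN3 : 3 ≤ N) (σ : Equiv.Perm A)
    (hσ : ∀ (a : A) (k : ℕ), (σ ^ k) a = a ↔ N ∣ k)
    (j : ℕ) (hj1 : 1 ≤ j) (hjN : j < N) (hj : ¬ j ≡ 1 [MOD N])
    (δ : Equiv.Perm A) (hδ : δ = σ ^ j) (a₀ : A) :
    ∀ a : A, ¬ IsFactorOf [a, δ a, δ (δ a)] (Wfix σ a₀) :=
  no_block_one_rep_general N σ hσ j hj δ hδ a₀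
end

section
/- If σ is a cyclic permutation of an alphabet A of size N ≥ 2, then the morphism ψ(a) = a σ(a) is primitive: there exists an integer n such that for all letters a, b ∈ A, the letter b occurs in ψ^n(a). -/
section Psi

variable {A : Type*} (σ : Equiv.Perm A) {a : A} {w : List A}

theorem mem_psi_of_mem (h : a ∈ w) : a ∈ psi σ w :=
  List.mem_flatMap.2 ⟨a, h, by simp⟩

theorem apply_mem_psi_of_mem (h : a ∈ w) : σ a ∈ psi σ w :=
  List.mem_flatMap.2 ⟨a, h, by simp⟩

theorem pow_apply_mem_iterate_psi {n k : ℕ} (h : a ∈ w) (hk : k ≤ n) :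
    (σ ^ k) a ∈ (psi σ)^[n] w := by
  induction n generalizing a w k with
  | zero => simp [Nat.le_zero.1 hk, h]
  | succ n ih =>
    rw [Function.iterate_succ_apply]
    cases k with
    | zero => exact ih (mem_psi_of_mem σ h) (Nat.zero_le n)
    | succ k =>
      rw [pow_succ, Equiv.Perm.mul_apply]
      exact ih (apply_mem_psi_of_mem σ h) (Nat.le_of_succ_le_succ hk)

end Psi

section Orbit

variable {A : Type*} {σ : Equiv.Perm A} {a : A} {N : ℕ}

theorem minimalPeriod_eq_of_pow_apply_eq_self_iff (hσ : ∀ k : ℕ, (σ ^ k) a = a ↔ N ∣ k) :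
    Function.minimalPeriod σ a = N := by
  refine Nat.dvd_right_iff_eq.1 fun k => ?_
  rw [← Function.isPeriodicPt_iff_minimalPeriod_dvd, ← hσ, Function.IsPeriodicPt,
    Function.IsFixedPt, ← Equiv.Perm.coe_pow]

theorem exists_lt_pow_apply_eq [Fintype A] (hN : Fintype.card A = N)
    (hσ : ∀ k : ℕ, (σ ^ k) a = a ↔ N ∣ k) (b : A) : ∃ k < N, (σ ^ k) a = b := by
  have hinjOn : Set.InjOn (fun k : ℕ => (σ ^ k) a) (Set.Iio N) := by
    simpa [← minimalPeriod_eq_of_pow_apply_eq_self_iff hσ, ← Equiv.Perm.coe_pow]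
      using Function.iterate_injOn_Iio_minimalPeriod (f := σ) (x := a)
  have hinj : Function.Injective fun k : Fin N => (σ ^ (k : ℕ)) a :=
    fun i j h => Fin.ext (hinjOn i.isLt j.isLt h)
  obtain ⟨k, hk⟩ := ((Fintype.bijective_iff_injective_and_card _).2 ⟨hinj, by simp [hN]⟩).2 b
  exact ⟨k, k.isLt, hk⟩

end Orbit

theorem psi_primitive_general {A : Type*} [Fintype A] (N : ℕ) (hN : Fintype.card A = N)
    (σ : Equiv.Perm A)
    (hσ : ∀ (a : A) (k : ℕ), (σ ^ k) a = a ↔ N ∣ k) :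
    ∃ n : ℕ, ∀ a b : A, b ∈ (psi σ)^[n] [a] := by
  refine ⟨N - 1, fun a b => ?_⟩
  obtain ⟨k, hk, rfl⟩ := exists_lt_pow_apply_eq hN (hσ a) b
  exact pow_apply_mem_iterate_psi σ (List.mem_singleton_self a) (Nat.le_sub_one_of_lt hk)

/-- if σ is a single N-cycle on A with N = |A| ≥ 2, then ψ is primitive:
    some power ψ^n maps every letter a to a word containing every letter b. -/
theorem psi_primitive {A : Type*} [Fintype A] (N : ℕ) (hN : Fintype.card A = N)
    (hN2 : 2 ≤ N) (σ : Equiv.Perm A)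
    (hσ : ∀ (a : A) (k : ℕ), (σ ^ k) a = a ↔ N ∣ k) :
    ∃ n : ℕ, ∀ a b : A, b ∈ (psi σ)^[n] [a] :=
  psi_primitive_general N hN σ hσ
end
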